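/- Minimality of the Wolff trellis state spaces (the paper's Theorem, in linear-algebraic form): let S₁,…,S_{n−k} be a basis of a subspace S ≤ V = (𝔽₂²)ⁿ and 0 ≤ i ≤ n. Then the i-th Wolff state space achieves the lower bound with equality: log₂|fᵢ(S^⊥)| = (n + k) − dim Cᵢᵖ − dim Cᵢᶠ, where dimensions are over 𝔽₂. -/

import Mathlib

/-- `V = (𝔽₂²)ⁿ`, the additive group underlying the effective Pauli group `Gₙ`. -/
abbrev PV (n : ℕ) := Fin n → ZMod 2 × ZMod 2

/-- The symplectic form `ω(v,w) = Σᵢ (aᵢb′ᵢ + a′ᵢbᵢ)` over `𝔽₂`. -/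
def sympOmega {n : ℕ} (v w : PV n) : ZMod 2 :=
  ∑ i, ((v i).1 * (w i).2 + (w i).1 * (v i).2)

lemma sympOmega_add_left {n : ℕ} (a b w : PV n) :
    sympOmega (a + b) w = sympOmega a w + sympOmega b w := by
  unfold sympOmega
  rw [← Finset.sum_add_distrib]
  refine Finset.sum_congr rfl fun i _ => ?_
  simp [Prod.fst_add, Prod.snd_add, add_mul, mul_add]
  ring

lemma sympOmega_smul_left {n : ℕ} (c : ZMod 2) (a w : PV n) :
    sympOmega (c • a) w = c * sympOmega a w := by
  unfold sympOmega
  rw [Finset.mul_sum]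
  refine Finset.sum_congr rfl fun i _ => ?_
  simp [Prod.smul_fst, Prod.smul_snd, smul_eq_mul]
  ring

/-- The symplectic orthogonal `S^⊥ = {P ∈ V : ω(P,Q) = 0 for all Q ∈ S}`. -/
def sPerp {n : ℕ} (S : Submodule (ZMod 2) (PV n)) : Submodule (ZMod 2) (PV n) where
  carrier := {P | ∀ Q ∈ S, sympOmega P Q = 0}
  add_mem' := by
    intro a b ha hb Q hQ
    rw [sympOmega_add_left, ha Q hQ, hb Q hQ, add_zero]
  zero_mem' := by
    intro Q hQ
    simp [sympOmega]
  smul_mem' := by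
    intro c a ha Q hQ
    rw [sympOmega_smul_left, ha Q hQ, mul_zero]

/-- The truncation map `πᵢ : V → V`, `(P₁,…,Pₙ) ↦ (P₁,…,Pᵢ,0,…,0)`. -/
def trunc (n i : ℕ) : PV n →ₗ[ZMod 2] PV n where
  toFun v := fun j => if (j : ℕ) < i then v j else 0
  map_add' := by
    intro a b
    funext j
    by_cases h : (j : ℕ) < i <;> simp [h]
  map_smul' := by
    intro c a
    funext j
    by_cases h : (j : ℕ) < i <;> simp [h]

/- ### Auxiliary lemmas -/


lemma sympOmega_comm {n : ℕ} (v w : PV n) : sympOmega v w = sympOmega w v := by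
  unfold sympOmega
  exact Finset.sum_congr rfl fun i _ => by ring

lemma sympOmega_zero_right {n : ℕ} (v : PV n) : sympOmega v 0 = 0 := by
  simp [sympOmega]

lemma sympOmega_add_right {n : ℕ} (v a b : PV n) :
    sympOmega v (a + b) = sympOmega v a + sympOmega v b := by
  rw [sympOmega_comm v (a + b), sympOmega_add_left, sympOmega_comm a v, sympOmega_comm b v]

lemma sympOmega_smul_right {n : ℕ} (c : ZMod 2) (v a : PV n) :
    sympOmega v (c • a) = c * sympOmega v a := by
  rw [sympOmega_comm v (c • a), sympOmega_smul_left, sympOmega_comm a v]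

/-- `ω` as a bilinear form. -/
def sympB (n : ℕ) : LinearMap.BilinForm (ZMod 2) (PV n) :=
  LinearMap.mk₂ (ZMod 2) sympOmega
    sympOmega_add_left
    (fun c a w => by rw [sympOmega_smul_left, smul_eq_mul])
    sympOmega_add_right
    (fun c a w => by rw [sympOmega_smul_right, smul_eq_mul])

@[simp] lemma sympB_apply {n : ℕ} (v w : PV n) : sympB n v w = sympOmega v w := rfl

lemma sympB_nondeg (n : ℕ) : (sympB n).Nondegenerate := by
  refine LinearMap.BilinForm.Nondegenerate.ofSeparatingLeft ?_
  intro v h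
  funext j
  have h1 := h (Pi.single j ((0 : ZMod 2), (1 : ZMod 2)))
  have h2 := h (Pi.single j ((1 : ZMod 2), (0 : ZMod 2)))
  rw [sympB_apply] at h1 h2
  unfold sympOmega at h1 h2
  rw [Finset.sum_eq_single j (fun m _ hm => by simp [Pi.single_eq_of_ne hm]) (by simp)] at h1 h2
  simp at h1 h2
  exact Prod.ext h1 h2

lemma sympB_refl (n : ℕ) : (sympB n).IsRefl := by
  intro x y h
  rw [sympB_apply] at h ⊢
  rw [sympOmega_comm]
  exact h

lemma sPerp_eq_orthogonal {n : ℕ} (S : Submodule (ZMod 2) (PV n)) :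
    sPerp S = (sympB n).orthogonal S := by
  ext P
  constructor
  · intro hP Q hQ
    show sympB n Q P = 0
    rw [sympB_apply, sympOmega_comm]
    exact hP Q hQ
  · intro hP Q hQ
    have := hP Q hQ
    rw [sympB_apply, sympOmega_comm] at this
    exact this

lemma trunc_idem {n : ℕ} (i : ℕ) (v : PV n) :
    trunc n i (trunc n i v) = trunc n i v := by
  funext j
  by_cases h : (j : ℕ) < i <;> simp [trunc, h]

lemma mem_sPerp_span {n m : ℕ} {Sgen : Fin m → PV n} {P : PV n}
    (h : ∀ j, sympOmega P (Sgen j) = 0) :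
    P ∈ sPerp (Submodule.span (ZMod 2) (Set.range Sgen)) := by
  intro Q hQ
  induction hQ using Submodule.span_induction with
  | mem x hx => obtain ⟨j, rfl⟩ := hx; exact h j
  | zero => exact sympOmega_zero_right P
  | add a b _ _ ha hb => rw [sympOmega_add_right, ha, hb, add_zero]
  | smul c a _ ha => rw [sympOmega_smul_right, ha, mul_zero]

/-- Minimality of the Wolff trellis state spaces: the i-th state space achieves the
lower bound with equality, |fᵢ(S^⊥)| = 2^{(n+k) − dim Cᵢᵖ − dim Cᵢᶠ}. -/
theorem wolff_state_space_minimal (n k : ℕ) (hk : k ≤ n)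
    (S : Submodule (ZMod 2) (PV n))
    (Sgen : Fin (n - k) → PV n) (hind : LinearIndependent (ZMod 2) Sgen)
    (hspan : Submodule.span (ZMod 2) (Set.range Sgen) = S)
    (i : ℕ) (hi : i ≤ n) :
    Nat.card ((fun (P : PV n) (j : Fin (n - k)) =>
          sympOmega (Sgen j) (trunc n i P)) '' (sPerp S : Set (PV n)))
      = 2 ^ (n + k
          - Module.finrank (ZMod 2)
              ↥(sPerp S ⊓ LinearMap.ker (LinearMap.id - trunc n i))
          - Module.finrank (ZMod 2) ↥(sPerp S ⊓ LinearMap.ker (trunc n i))) := by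
  classical
  set W := sPerp S with hWdef
  have hmemS : ∀ j, Sgen j ∈ S := fun j => hspan ▸ Submodule.subset_span ⟨j, rfl⟩
  -- the Wolff state map as a linear map
  set g : PV n →ₗ[ZMod 2] (Fin (n - k) → ZMod 2) :=
    { toFun := fun P j => sympOmega (Sgen j) (trunc n i P)
      map_add' := fun a b => funext fun j => by
        simp only [map_add, sympOmega_add_right]; rfl
      map_smul' := fun c a => funext fun j => by
        simp only [map_smul, sympOmega_smul_right]; rfl } with hgdef
  set g' := g.comp W.subtype with hg'def
  -- the image set is the range of `g'`
  have hset : (fun (P : PV n) (j : Fin (n - k)) =>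
      sympOmega (Sgen j) (trunc n i P)) '' (W : Set (PV n))
      = (LinearMap.range g' : Set (Fin (n - k) → ZMod 2)) := by
    ext x
    constructor
    · rintro ⟨P, hP, rfl⟩
      exact ⟨⟨P, hP⟩, rfl⟩
    · rintro ⟨⟨P, hP⟩, rfl⟩
      exact ⟨P, hP, rfl⟩
  -- dimension of the ambient space
  have hVdim : Module.finrank (ZMod 2) (PV n) = 2 * n := by
    rw [Module.finrank_pi_fintype]
    simp [Module.finrank_self]
    ring
  -- dimension of S
  have hSdim : Module.finrank (ZMod 2) S = n - k := by
    rw [← hspan, finrank_span_eq_card hind, Fintype.card_fin]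
  -- dimension of W = S^⊥
  have hWdim : Module.finrank (ZMod 2) W = n + k := by
    rw [hWdef, sPerp_eq_orthogonal,
      LinearMap.BilinForm.finrank_orthogonal (sympB_nondeg n), hVdim, hSdim]
    omega
  -- kernel of g on W decomposes as past ⊔ future
  set Cp := W ⊓ LinearMap.ker (LinearMap.id - trunc n i) with hCp
  set Cf := W ⊓ LinearMap.ker (trunc n i) with hCf
  have hker : W ⊓ LinearMap.ker g = Cp ⊔ Cf := by
    apply le_antisymm
    · rintro P ⟨hPW, hPg⟩
      have hPg' : ∀ j, sympOmega (trunc n i P) (Sgen j) = 0 := by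
        intro j
        rw [sympOmega_comm]
        exact congrFun (LinearMap.mem_ker.mp hPg) j
      have htP : trunc n i P ∈ W := by
        rw [hWdef, ← hspan]
        exact mem_sPerp_span hPg'
      have h1 : trunc n i P ∈ Cp := by
        refine ⟨htP, ?_⟩
        show trunc n i P ∈ LinearMap.ker (LinearMap.id - trunc n i)
        rw [LinearMap.mem_ker, LinearMap.sub_apply, LinearMap.id_apply, trunc_idem, sub_self]
      have h2 : P - trunc n i P ∈ Cf := by
        refine ⟨W.sub_mem hPW htP, ?_⟩
        show trunc n i (P - trunc n i P) = 0
        rw [map_sub, trunc_idem, sub_self]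
      have : P = trunc n i P + (P - trunc n i P) := by abel
      rw [this]
      exact Submodule.add_mem_sup h1 h2
    · apply sup_le
      · rintro P ⟨hPW, hP⟩
        replace hP : P ∈ LinearMap.ker (LinearMap.id - trunc n i) := hP
        rw [LinearMap.mem_ker, LinearMap.sub_apply, LinearMap.id_apply, sub_eq_zero] at hP
        refine ⟨hPW, ?_⟩
        show g P = 0
        funext j
        show sympOmega (Sgen j) (trunc n i P) = 0
        rw [← hP, sympOmega_comm]
        exact hPW (Sgen j) (hmemS j)
      · rintro P ⟨hPW, hP⟩
        replace hP : trunc n i P = 0 := hP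
        refine ⟨hPW, ?_⟩
        show g P = 0
        funext j
        show sympOmega (Sgen j) (trunc n i P) = 0
        rw [hP, sympOmega_zero_right]
  have hdisj : Cp ⊓ Cf = ⊥ := by
    rw [eq_bot_iff]
    rintro P ⟨⟨_, h1⟩, ⟨_, h2⟩⟩
    replace h1 : P ∈ LinearMap.ker (LinearMap.id - trunc n i) := h1
    rw [LinearMap.mem_ker, LinearMap.sub_apply, LinearMap.id_apply, sub_eq_zero] at h1
    replace h2 : trunc n i P = 0 := h2
    show P ∈ (⊥ : Submodule (ZMod 2) (PV n))
    rw [Submodule.mem_bot, h1, h2]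
  have hsum : Module.finrank (ZMod 2) ↥(W ⊓ LinearMap.ker g)
      = Module.finrank (ZMod 2) Cp + Module.finrank (ZMod 2) Cf := by
    rw [hker, ← Submodule.finrank_sup_add_finrank_inf_eq Cp Cf, hdisj, finrank_bot, add_zero]
  -- kernel of g' has the same dimension
  have hkd : Module.finrank (ZMod 2) ↥(LinearMap.ker g')
      = Module.finrank (ZMod 2) ↥(W ⊓ LinearMap.ker g) := by
    rw [hg'def, LinearMap.ker_comp, ← Submodule.map_comap_subtype,
      Submodule.finrank_map_subtype_eq]
  -- rank-nullity
  have hrn := LinearMap.finrank_range_add_finrank_ker g'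
  rw [hkd, hsum, hWdim] at hrn
  -- cardinality of the range
  have hfin : Fintype ↥(LinearMap.range g') := Fintype.ofFinite _
  have hcard : Nat.card ↥(LinearMap.range g')
      = 2 ^ Module.finrank (ZMod 2) ↥(LinearMap.range g') := by
    rw [Nat.card_eq_fintype_card, Module.card_eq_pow_finrank (K := ZMod 2), ZMod.card]
  rw [hset, SetLike.coe_sort_coe, hcard]
  congr 1
  have hle : Module.finrank (ZMod 2) Cp + Module.finrank (ZMod 2) Cf ≤ n + k := by omega
  omega
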